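/- In a unitary N=2 superconformal vertex algebra of central charge c, every primary chiral state a has conformal weight h ≤ c/6. -/
import Mathlib


open scoped ComplexInnerProductSpace in
/-- In a unitary N=2 superconformal vertex algebra of central charge `c`, every
primary chiral state `a` (of conformal weight `h` and charge `q = 2h`, annihilated by
`G⁻_{3/2}`) has conformal weight `h ≤ c/6`.  Here `A = G⁺_{-3/2}`, `B = G⁻_{3/2}`, so that
unitarity gives `A* = B` and the mode relation gives `[B, A] = 2L₀ − 3J₀ + (2c/3)·id`. -/
theorem primary_chiral_weight_bound {V : Type*} [NormedAddCommGroup V]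
    [InnerProductSpace ℂ V] (c h q : ℝ)
    (L0 J0 A B : V →ₗ[ℂ] V)
    (hadj : ∀ x y : V, ⟪A x, y⟫ = ⟪x, B y⟫)
    (hbr : B ∘ₗ A + A ∘ₗ B =
      (2 : ℂ) • L0 - (3 : ℂ) • J0 + (2 * (c : ℂ) / 3) • LinearMap.id)
    (a : V) (ha : a ≠ 0)
    (hL : L0 a = (h : ℂ) • a) (hJ : J0 a = (q : ℂ) • a)
    (hchiral : q = 2 * h) (hBa : B a = 0) :
    h ≤ c / 6 := by
  have hBAa : B (A a) = ((2 * h - 3 * q + 2 * c / 3 : ℝ) : ℂ) • a := by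
    have := congrArg (fun f => f a) hbr
    simp only [LinearMap.add_apply, LinearMap.sub_apply, LinearMap.comp_apply,
      LinearMap.smul_apply, LinearMap.id_apply, hBa, map_zero, hL, hJ] at this
    rw [add_zero] at this
    rw [this, smul_smul, smul_smul, ← sub_smul, ← add_smul]
    norm_num
  have hinner : ⟪A a, A a⟫ = ((2 * h - 3 * q + 2 * c / 3 : ℝ) : ℂ) * ⟪a, a⟫ := by
    rw [hadj, hBAa, inner_smul_right]
  have h1 : (0:ℝ) ≤ (2 * h - 3 * q + 2 * c / 3) * ‖a‖ ^ 2 := by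
    have := inner_self_nonneg (𝕜 := ℂ) (x := A a)
    have h2 : RCLike.re (⟪A a, A a⟫ : ℂ) =
        (2 * h - 3 * q + 2 * c / 3) * ‖a‖ ^ 2 := by
      rw [hinner, inner_self_eq_norm_sq_to_K]
      simp [← Complex.ofReal_pow, ← Complex.ofReal_mul]
    rw [h2] at this
    exact this
  have hna : (0:ℝ) < ‖a‖ ^ 2 := by exact pow_pos (norm_pos_iff.mpr ha) 2
  subst hchiral
  nlinarith
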